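/- Let $n \geq 1$ be an integer and let $Q \in \mathbb{C}[x,y,z]$ be defined by $Q = (x^2+y^2)S_n(z)S_{n-1}(z)^2 - xy\,S_{n-1}(z)\big(S_n(z)^2 + S_{n-1}(z)^2\big) + S_{3n}(z)$, where $S_k$ are the Chebyshev polynomials with $S_0=1$, $S_1(t)=t$, $S_{k+1}(t)=tS_k(t)-S_{k-1}(t)$. Then $Q$ is irreducible in $\mathbb{C}[x,y,z]$. -/

import Mathlib

/-!
Viewed as a quadratic in `x` over the UFD `ℂ[z][y]`, `Q` has coefficients
`a = S_n S_{n-1}²`, `b = -y S_{n-1} (S_n² + S_{n-1}²)` and `c = y² a + S_{3n}`. It is primitive: a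
common divisor of `a, b, c` divides `S_{3n} = c - y² a`, hence is coprime to `S_{n-1}` (as
`S_{3n} ≡ S_n³` modulo `S_{n-1}` and `S_n, S_{n-1}` are coprime), so it divides `S_n` and then
`y`, while `y ∤ S_n(z)`. Its
discriminant is `S_{n-1}² (y² (S_n² - S_{n-1}²)² - 4 S_n S_{3n})`, and the second factor is not a
square, being a quadratic in `y` with no linear term and nonzero constant term. As `ℂ[z][y]` is
integrally closed, the discriminant is not a square in its fraction field either, so `Q` is
irreducible there, and by Gauss's lemma over `ℂ[z][y]`.
-/

open Polynomial

namespace Polynomial.Chebyshev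

variable (R : Type*) [CommRing R]

theorem eq_S_of_recurrence (S' : ℤ → R[X]) (h0 : S' 0 = 1) (h1 : S' 1 = X)
    (h : ∀ k : ℤ, S' (k + 1) = X * S' k - S' (k - 1)) : S' = S R := by
  funext k
  induction k using Polynomial.Chebyshev.induct with
  | zero => rw [h0, S_zero]
  | one => rw [h1, S_one]
  | add_two n ih₁ ih₀ =>
    linear_combination (norm := ring_nf) h (n + 1) + X * ih₁ - ih₀ - S_add_two R n
  | neg_add_one n ih₀ ih₁ =>
    linear_combination (norm := ring_nf) h (-n) + X * ih₀ - ih₁ - S_sub_one R (-n)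

theorem S_add (m n : ℤ) : S R (m + n) = S R m * S R n - S R (m - 1) * S R (n - 1) := by
  induction n using Polynomial.Chebyshev.induct with
  | zero => simp
  | one => rw [S_one, sub_self, S_zero, S_add_one]; ring
  | add_two n ih₁ ih₀ =>
    linear_combination (norm := ring_nf) S_add_two R (m + n) + X * ih₁ - ih₀
      - S R m * S_add_two R n + S R (m - 1) * S_add_one R n
  | neg_add_one n ih₀ ih₁ =>
    linear_combination (norm := ring_nf) S_sub_one R (m - n) + X * ih₀ - ih₁
      - S R m * S_sub_one R (-n) + S R (m - 1) * S_sub_one R (-n - 1)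

theorem isCoprime_S_S_add_one (n : ℤ) : IsCoprime (S R n) (S R (n + 1)) :=
  ⟨S R n - X * S R (n + 1), S R (n + 1), by linear_combination S_sq_add_S_sq R n⟩

theorem isCoprime_S_sub_one_S_three_mul (n : ℤ) : IsCoprime (S R (n - 1)) (S R (3 * n)) := by
  have hcop : IsCoprime (S R (n - 1)) (S R n ^ 3) := by
    simpa only [sub_add_cancel] using (isCoprime_S_S_add_one R (n - 1)).pow_right (n := 3)
  have h : S R (3 * n) = S R n ^ 3 + S R (n - 1) * -(S R (n - 1) * S R n + S R (2 * n - 1)) := by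
    linear_combination (norm := ring_nf) S_add R (2 * n) n + S R n * S_add R n n
  rw [h]
  exact hcop.add_mul_left_right _

theorem S_ne_zero [CharZero R] {n : ℤ} (hn : n ≠ -1) : S R n ≠ 0 := by
  intro h
  have h2 := S_eval_two R n
  rw [h, eval_zero] at h2
  exact hn (by exact_mod_cast (eq_neg_of_add_eq_zero_left h2.symm : (n : R) = -1))

theorem S_sq_ne_S_sub_one_sq [CharZero R] (n : ℤ) : S R n ^ 2 ≠ S R (n - 1) ^ 2 := by
  intro h
  have h2 := congrArg (eval 2) h
  simp only [eval_pow, S_eval_two, Int.cast_sub, Int.cast_one, sub_add_cancel] at h2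
  have : ((2 * n + 1 : ℤ) : R) = 0 := by push_cast; linear_combination h2
  have := Int.cast_eq_zero.mp this
  omega

end Polynomial.Chebyshev

theorem IsIntegrallyClosed.isSquare_of_isSquare_algebraMap {R K : Type*} [CommRing R] [CommRing K]
    [Algebra R K] [IsFractionRing R K] [IsIntegrallyClosed R] {r : R}
    (h : IsSquare (algebraMap R K r)) : IsSquare r := by
  obtain ⟨t, ht⟩ := h
  obtain ⟨s, hs⟩ := IsIntegrallyClosed.exists_algebraMap_eq_of_isIntegral_pow (R := R) (K := K)
    two_pos (by rw [sq, ← ht]; exact isIntegral_algebraMap)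
  exact ⟨s, IsFractionRing.injective R K (by rw [map_mul, hs, ht])⟩

theorem IsIntegrallyClosed.isSquare_of_isSquare_sq_mul {R : Type*} [CommRing R] [IsDomain R]
    [IsIntegrallyClosed R] {q r : R} (hq : q ≠ 0) (h : IsSquare (q ^ 2 * r)) : IsSquare r := by
  obtain ⟨d, hd⟩ := h
  obtain ⟨e, rfl⟩ : q ∣ d :=
    (IsIntegrallyClosed.pow_dvd_pow_iff two_ne_zero).mp ⟨r, by rw [hd, sq]⟩
  exact ⟨e, mul_left_cancel₀ (pow_ne_zero 2 hq) (by rw [hd]; ring)⟩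

namespace Polynomial

theorem irreducible_quadratic_of_not_isSquare_discrim {K : Type*} [Field K] {a b c : K}
    (ha : a ≠ 0) (h : ¬IsSquare (discrim a b c)) : Irreducible (C a * X ^ 2 + C b * X + C c) := by
  refine irreducible_of_degree_le_three_of_not_isRoot (by simp [natDegree_quadratic ha]) ?_
  intro x hx
  refine h ⟨2 * a * x + b, ?_⟩
  rw [discrim_eq_sq_of_quadratic_eq_zero (x := x) (by simpa [sq] using hx), sq]

theorem IsPrimitive.irreducible_quadratic {R : Type*} [CommRing R] [IsDomain R]
    [IsIntegrallyClosed R] {a b c : R} (hprim : (C a * X ^ 2 + C b * X + C c).IsPrimitive)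
    (ha : a ≠ 0) (h : ¬IsSquare (discrim a b c)) : Irreducible (C a * X ^ 2 + C b * X + C c) := by
  set i := algebraMap R (FractionRing R)
  have hi : Function.Injective i := IsFractionRing.injective R _
  refine hprim.irreducible_of_irreducible_map_of_injective hi ?_
  have hmap : map i (C a * X ^ 2 + C b * X + C c) = C (i a) * X ^ 2 + C (i b) * X + C (i c) := by
    simp
  have hdiscrim : i (discrim a b c) = discrim (i a) (i b) (i c) := by
    simp only [discrim, map_sub, map_mul, map_pow, map_ofNat]
  rw [hmap]
  refine irreducible_quadratic_of_not_isSquare_discrim ((map_ne_zero_iff _ hi).2 ha) fun hsq => ?_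
  exact h (IsIntegrallyClosed.isSquare_of_isSquare_algebraMap (hdiscrim ▸ hsq))

theorem isPrimitive_quadratic {R : Type*} [CommSemiring R] {a b c : R}
    (h : ∀ r, r ∣ a → r ∣ b → r ∣ c → IsUnit r) : (C a * X ^ 2 + C b * X + C c).IsPrimitive := by
  rw [isPrimitive_iff_isUnit_of_C_dvd]
  intro r hr
  rw [C_dvd_iff_dvd_coeff] at hr
  exact h r (by simpa using hr 2) (by simpa using hr 1) (by simpa using hr 0)

theorem not_isSquare_C_mul_X_sq_add_C {A : Type*} [CommRing A] [IsDomain A] (h2 : (2 : A) ≠ 0)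
    {a c : A} (ha : a ≠ 0) (hc : c ≠ 0) : ¬IsSquare (C a * X ^ 2 + C c) := by
  rintro ⟨d, hd⟩
  have hdeg : d.natDegree = 1 := by
    have hd0 : d ≠ 0 := by rintro rfl; simpa [ha] using congrArg (coeff · 2) hd
    have := congrArg natDegree hd
    rw [natDegree_mul hd0 hd0, natDegree_add_C, natDegree_C_mul_X_pow 2 a ha] at this
    omega
  set u := d.coeff 1
  set v := d.coeff 0
  have hexp : d * d = C (u * u) * X ^ 2 + C (2 * (u * v)) * X + C (v * v) := by
    rw [eq_X_add_C_of_natDegree_le_one hdeg.le]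
    simp only [map_mul, map_ofNat]
    ring
  rw [hexp] at hd
  have hc0 := congrArg (coeff · 0) hd
  have hc1 := congrArg (coeff · 1) hd
  have hc2 := congrArg (coeff · 2) hd
  simp only [coeff_add, coeff_C_mul_X_pow, coeff_C_mul_X, coeff_C] at hc0 hc1 hc2
  norm_num at hc0 hc1 hc2
  rcases hc1 with h | h | h
  · exact h2 h
  · exact ha (by rw [hc2, h, zero_mul])
  · exact hc (by rw [hc0, h, zero_mul])

end Polynomial

section CharacterQuadratic

variable {R : Type*} [CommRing R]

/-- `Q` as a quadratic polynomial in `x` over `ℂ[y, z]`, with `p = S_n(z)`, `q = S_{n-1}(z)` and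
`s = S_{3n}(z)`. -/
noncomputable def characterQuadratic (y p q s : R) : R[X] :=
  C (p * q ^ 2) * X ^ 2 + C (-(y * q * (p ^ 2 + q ^ 2))) * X + C (y ^ 2 * (p * q ^ 2) + s)

theorem isPrimitive_characterQuadratic {y p q s : R} (hy : Irreducible y) (hyp : ¬y ∣ p)
    (hqs : IsCoprime q s) : (characterQuadratic y p q s).IsPrimitive := by
  refine isPrimitive_quadratic fun r ha hb hc => ?_
  have hrs : r ∣ s := (dvd_add_right (dvd_mul_of_dvd_right ha (y ^ 2))).mp hc
  have hrq : IsCoprime r q := hqs.symm.of_isCoprime_of_dvd_left hrs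
  have hrp : r ∣ p := hrq.pow_right.dvd_of_dvd_mul_right ha
  have hry : r ∣ y := by
    have h₁ : r ∣ y * (p ^ 2 + q ^ 2) * q :=
      dvd_neg.mp (by rwa [mul_right_comm] at hb)
    have h₂ : r ∣ y * p ^ 2 + y * q ^ 2 := by
      rw [← mul_add]; exact hrq.dvd_of_dvd_mul_right h₁
    have h₃ : r ∣ y * q ^ 2 :=
      (dvd_add_right ((hrp.trans (dvd_pow_self p two_ne_zero)).mul_left y)).mp h₂
    exact hrq.pow_right.dvd_of_dvd_mul_right h₃
  rcases hy.dvd_iff.mp hry with hu | hassoc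
  · exact hu
  · exact absurd (hassoc.dvd.trans hrp) hyp

theorem irreducible_characterQuadratic [IsDomain R] [IsIntegrallyClosed R] {y p q s : R}
    (hy : Irreducible y) (hyp : ¬y ∣ p) (hq : q ≠ 0) (hqs : IsCoprime q s)
    (hD : ¬IsSquare (y ^ 2 * (p ^ 2 - q ^ 2) ^ 2 - 4 * (p * s))) :
    Irreducible (characterQuadratic y p q s) := by
  refine (isPrimitive_characterQuadratic hy hyp hqs).irreducible_quadratic
    (mul_ne_zero (fun hp => hyp (hp ▸ dvd_zero y)) (pow_ne_zero 2 hq)) fun h => ?_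
  have hdiscrim : discrim (p * q ^ 2) (-(y * q * (p ^ 2 + q ^ 2))) (y ^ 2 * (p * q ^ 2) + s) =
      q ^ 2 * (y ^ 2 * (p ^ 2 - q ^ 2) ^ 2 - 4 * (p * s)) := by
    rw [discrim]; ring
  exact hD (IsIntegrallyClosed.isSquare_of_isSquare_sq_mul hq (hdiscrim ▸ h))

theorem irreducible_characterQuadratic_X_C {A : Type*} [CommRing A] [IsDomain A]
    [IsIntegrallyClosed A] (h2 : (2 : A) ≠ 0) {p q s : A} (hp : p ≠ 0) (hq : q ≠ 0) (hs : s ≠ 0)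
    (hpq : p ^ 2 ≠ q ^ 2) (hqs : IsCoprime q s) :
    Irreducible (characterQuadratic X (C p) (C q) (C s)) := by
  refine irreducible_characterQuadratic irreducible_X (by simpa [X_dvd_iff] using hp)
    (C_ne_zero.mpr hq) (hqs.map C) ?_
  have hD : X ^ 2 * (C p ^ 2 - C q ^ 2) ^ 2 - 4 * (C p * C s) =
      C ((p ^ 2 - q ^ 2) ^ 2) * X ^ 2 + C (-(4 * (p * s))) := by
    simp only [map_neg, map_mul, map_pow, map_sub, map_ofNat]; ring
  have h4 : (4 : A) ≠ 0 := by
    rw [show (4 : A) = 2 * 2 by norm_num]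
    exact mul_ne_zero h2 h2
  rw [hD]
  exact not_isSquare_C_mul_X_sq_add_C h2 (pow_ne_zero 2 (sub_ne_zero.mpr hpq))
    (neg_ne_zero.mpr (mul_ne_zero h4 (mul_ne_zero hp hs)))

end CharacterQuadratic

section FinThreeEquiv

variable (R : Type*) [CommRing R]

noncomputable def finThreeEquivPolynomial : MvPolynomial (Fin 3) R ≃ₐ[R] R[X][X][X] :=
  (MvPolynomial.finSuccEquiv R 2).trans (mapAlgEquiv ((MvPolynomial.finSuccEquiv R 1).trans
    (mapAlgEquiv (MvPolynomial.uniqueAlgEquiv R (Fin 1)))))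

theorem finThreeEquivPolynomial_X_zero : finThreeEquivPolynomial R (MvPolynomial.X 0) = X := by
  simp [finThreeEquivPolynomial, MvPolynomial.finSuccEquiv_X_zero]

theorem finThreeEquivPolynomial_X_one : finThreeEquivPolynomial R (MvPolynomial.X 1) = C X := by
  have h := MvPolynomial.finSuccEquiv_X_succ (R := R) (j := (0 : Fin 2))
  rw [Fin.succ_zero_eq_one] at h
  simp [finThreeEquivPolynomial, h, MvPolynomial.finSuccEquiv_X_zero]

theorem finThreeEquivPolynomial_X_two :
    finThreeEquivPolynomial R (MvPolynomial.X 2) = C (C X) := by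
  have h₂ := MvPolynomial.finSuccEquiv_X_succ (R := R) (j := (1 : Fin 2))
  have h₁ := MvPolynomial.finSuccEquiv_X_succ (R := R) (j := (0 : Fin 1))
  rw [Fin.succ_one_eq_two] at h₂
  rw [Fin.succ_zero_eq_one] at h₁
  simp [finThreeEquivPolynomial, h₁, h₂]

theorem finThreeEquivPolynomial_aeval_X_two (f : R[X]) :
    finThreeEquivPolynomial R (aeval (MvPolynomial.X 2) f) = C (C f) := by
  rw [← aeval_algHom_apply, finThreeEquivPolynomial_X_two]
  simpa using aeval_algebraMap_apply (R := R) (A := R[X]) (B := R[X][X][X]) X f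

end FinThreeEquiv

open MvPolynomial in
theorem stmt_17 (S : ℤ → Polynomial ℂ) (hS0 : S 0 = 1) (hS1 : S 1 = Polynomial.X)
    (hS : ∀ k : ℤ, S (k + 1) = Polynomial.X * S k - S (k - 1))
    (n : ℤ) (hn : 1 ≤ n)
    (x y z : MvPolynomial (Fin 3) ℂ) (hx : x = X 0) (hy : y = X 1) (hz : z = X 2)
    (Q : MvPolynomial (Fin 3) ℂ)
    (hQ : Q = (x ^ 2 + y ^ 2) * Polynomial.aeval z (S n) * (Polynomial.aeval z (S (n - 1))) ^ 2
      - x * y * Polynomial.aeval z (S (n - 1)) *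
          ((Polynomial.aeval z (S n)) ^ 2 + (Polynomial.aeval z (S (n - 1))) ^ 2)
      + Polynomial.aeval z (S (3 * n))) :
    Irreducible Q := by
  obtain rfl := Chebyshev.eq_S_of_recurrence ℂ S hS0 hS1 hS
  have hQ' : finThreeEquivPolynomial ℂ Q = characterQuadratic Polynomial.X
      (Polynomial.C (Chebyshev.S ℂ n)) (Polynomial.C (Chebyshev.S ℂ (n - 1)))
      (Polynomial.C (Chebyshev.S ℂ (3 * n))) := by
    simp only [hQ, hx, hy, hz, characterQuadratic, map_add, map_sub, map_mul, map_pow, map_neg,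
      finThreeEquivPolynomial_X_zero, finThreeEquivPolynomial_X_one,
      finThreeEquivPolynomial_aeval_X_two]
    ring
  rw [← MulEquiv.irreducible_iff (finThreeEquivPolynomial ℂ), hQ']
  exact irreducible_characterQuadratic_X_C two_ne_zero (Chebyshev.S_ne_zero ℂ (by omega))
    (Chebyshev.S_ne_zero ℂ (by omega)) (Chebyshev.S_ne_zero ℂ (by omega))
    (Chebyshev.S_sq_ne_S_sub_one_sq ℂ n) (Chebyshev.isCoprime_S_sub_one_S_three_mul ℂ n)
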